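/- arXiv:1709.07680 — 5 statements merged into one kernel-verified Lean document; each statement's English description precedes it below -/
import Mathlib

section
/- Let X be a nonempty set and G a G-metric on X. Then G is jointly sequentially continuous in its three variables: if (x_n), (y_n), (z_n) are sequences in X that G-converge to x, y, z respectively, then G(x_n, y_n, z_n) converges to G(x, y, z) in ℝ. -/
/-- A G-metric on a set `X` (Mustafa–Sims). -/
structure IsGMetric {X : Type*} (G : X → X → X → ℝ) : Prop where
  /-- `G` takes values in `[0, ∞)`. -/
  nonneg : ∀ x y z, 0 ≤ G x y z
  /-- (G1) `G(x,y,z) = 0` whenever `x = y = z`. -/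
  eq_zero_of_eq : ∀ x y z : X, x = y → y = z → G x y z = 0
  /-- (G2) `G(x,x,y) > 0` whenever `x ≠ y`. -/
  pos_of_ne : ∀ x y : X, x ≠ y → 0 < G x x y
  /-- (G3) `G(x,x,y) ≤ G(x,y,z)` whenever `z ≠ y`. -/
  le_of_ne : ∀ x y z : X, z ≠ y → G x x y ≤ G x y z
  /-- (G4) symmetry: swap the last two variables. -/
  symm_swap : ∀ x y z, G x y z = G x z y
  /-- (G4) symmetry: cyclic permutation of the variables. -/
  symm_cycle : ∀ x y z, G x y z = G y z x
  /-- (G5) the rectangle inequality. -/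
  rect : ∀ x y z a, G x y z ≤ G x a a + G a y z

/-- The relation induced by `φ`: `x ⪯ y ↔ G(x,y,y) ≤ φ(y) - φ(x)`. -/
def PhiRel {X : Type*} (G : X → X → X → ℝ) (φ : X → ℝ) (x y : X) : Prop :=
  G x y y ≤ φ y - φ x

/-- A sequence `s` G-converges to `p` if `lim_{n,m → ∞} G(p, s n, s m) = 0`. -/
def GConvergesTo {X : Type*} (G : X → X → X → ℝ) (s : ℕ → X) (p : X) : Prop :=
  ∀ ε > (0 : ℝ), ∃ N, ∀ n ≥ N, ∀ m ≥ N, G p (s n) (s m) < ε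

/-- A sequence `s` is G-Cauchy. -/
def GCauchy {X : Type*} (G : X → X → X → ℝ) (s : ℕ → X) : Prop :=
  ∀ ε > (0 : ℝ), ∃ N, ∀ n ≥ N, ∀ m ≥ N, ∀ l ≥ N, G (s n) (s m) (s l) < ε

/-- `(X, G)` is G-complete: every G-Cauchy sequence G-converges. -/
def GComplete {X : Type*} (G : X → X → X → ℝ) : Prop :=
  ∀ s : ℕ → X, GCauchy G s → ∃ p, GConvergesTo G s p

/-- A self-map is sequentially continuous w.r.t. `G`. -/
def SeqContinuous1 {X : Type*} (G : X → X → X → ℝ) (g : X → X) : Prop :=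
  ∀ (s : ℕ → X) (p : X), GConvergesTo G s p → GConvergesTo G (fun n => g (s n)) (g p)

/-- A map `F : Xⁿ → X` is sequentially continuous w.r.t. `G`. -/
def SeqContinuousN {X : Type*} (G : X → X → X → ℝ) {n : ℕ} (F : (Fin n → X) → X) : Prop :=
  ∀ (s : ℕ → Fin n → X) (p : Fin n → X),
    (∀ j, GConvergesTo G (fun l => s l j) (p j)) →
    GConvergesTo G (fun l => F (s l)) (F p)

/-- The pair `{F, g}` is weakly related (indices taken cyclically). -/
def WeaklyRelated {X : Type*} (G : X → X → X → ℝ) (φ : X → ℝ) {n : ℕ}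
    (F : (Fin n → X) → X) (g : X → X) : Prop :=
  ∀ (x : Fin n → X) (i : Fin n),
    PhiRel G φ (F (fun j => x (i + j))) (g (F (fun j => x (i + j)))) ∧
    PhiRel G φ (g (x i)) (F (fun j => g (x (i + j))))

/-- a G-metric is jointly sequentially continuous in its three variables. -/
theorem gMetric_continuous {X : Type*} [Nonempty X] (G : X → X → X → ℝ)
    (hG : IsGMetric G) (xs ys zs : ℕ → X) (x y z : X)
    (hx : GConvergesTo G xs x) (hy : GConvergesTo G ys y) (hz : GConvergesTo G zs z) :
    Filter.Tendsto (fun n => G (xs n) (ys n) (zs n)) Filter.atTop (nhds (G x y z)) := by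
  have htwo : ∀ a b : X, G a b b ≤ 2 * G b a a := by
    intro a b
    have h1 : G a b b ≤ G a a a + G a b b := hG.rect a b b a
    have h2 : G a b b = G b b a := by rw [hG.symm_cycle]
    have h3 : G b b a ≤ G b a a + G a b a := hG.rect b b a a
    have h4 : G a b a = G b a a := by rw [hG.symm_cycle]
    linarith [h2, h3, h4]
  rw [Metric.tendsto_atTop]
  intro ε hε
  have hε6 : (0:ℝ) < ε / 6 := by linarith
  obtain ⟨Nx, hNx⟩ := hx (ε/6) hε6
  obtain ⟨Ny, hNy⟩ := hy (ε/6) hε6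
  obtain ⟨Nz, hNz⟩ := hz (ε/6) hε6
  refine ⟨max Nx (max Ny Nz), fun n hn => ?_⟩
  have hnx : n ≥ Nx := le_trans (le_max_left _ _) hn
  have hny : n ≥ Ny := le_trans (le_trans (le_max_left _ _) (le_max_right _ _)) hn
  have hnz : n ≥ Nz := le_trans (le_trans (le_max_right _ _) (le_max_right _ _)) hn
  have ax : G x (xs n) (xs n) < ε/6 := hNx n hnx n hnx
  have ay : G y (ys n) (ys n) < ε/6 := hNy n hny n hny
  have az : G z (zs n) (zs n) < ε/6 := hNz n hnz n hnz
  have bx : G (xs n) x x ≤ 2 * G x (xs n) (xs n) := htwo _ _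
  have by' : G (ys n) y y ≤ 2 * G y (ys n) (ys n) := htwo _ _
  have bz : G (zs n) z z ≤ 2 * G z (zs n) (zs n) := htwo _ _
  -- upper bound
  have u1 : G (xs n) (ys n) (zs n) ≤ G (xs n) x x + G x (ys n) (zs n) := hG.rect _ _ _ _
  have u2 : G x (ys n) (zs n) = G (ys n) (zs n) x := hG.symm_cycle _ _ _
  have u3 : G (ys n) (zs n) x ≤ G (ys n) y y + G y (zs n) x := hG.rect _ _ _ _
  have u4 : G y (zs n) x = G (zs n) x y := hG.symm_cycle _ _ _
  have u5 : G (zs n) x y ≤ G (zs n) z z + G z x y := hG.rect _ _ _ _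
  have u6 : G z x y = G x y z := hG.symm_cycle _ _ _
  -- lower bound
  have l1 : G x y z ≤ G x (xs n) (xs n) + G (xs n) y z := hG.rect _ _ _ _
  have l2 : G (xs n) y z = G y z (xs n) := hG.symm_cycle _ _ _
  have l3 : G y z (xs n) ≤ G y (ys n) (ys n) + G (ys n) z (xs n) := hG.rect _ _ _ _
  have l4 : G (ys n) z (xs n) = G z (xs n) (ys n) := hG.symm_cycle _ _ _
  have l5 : G z (xs n) (ys n) ≤ G z (zs n) (zs n) + G (zs n) (xs n) (ys n) := hG.rect _ _ _ _
  have l6 : G (zs n) (xs n) (ys n) = G (xs n) (ys n) (zs n) := hG.symm_cycle _ _ _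
  rw [Real.dist_eq, abs_lt]
  constructor <;> linarith
end

section
/- Let X be a nonempty set, G a G-metric on X, φ : X → ℝ a function bounded from above, and ⪯ the relation induced by φ. If (x_l) is a sequence in X with x_l ⪯ x_{l+1} for all l ≥ 0, then (x_l) is a G-Cauchy sequence. -/
/-- a `⪯`-non-decreasing sequence is G-Cauchy when `φ` is bounded above. -/
theorem monotone_seq_gCauchy {X : Type*} [Nonempty X] (G : X → X → X → ℝ)
    (hG : IsGMetric G) (φ : X → ℝ) (hφ : ∃ M, ∀ x, φ x ≤ M)
    (x : ℕ → X) (hmono : ∀ l, PhiRel G φ (x l) (x (l + 1))) :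
    GCauchy G x := by
  intro ε hε
  -- chain inequality
  have hchain : ∀ n m, n ≤ m → G (x n) (x m) (x m) ≤ φ (x m) - φ (x n) := by
    intro n m hnm
    induction m, hnm using Nat.le_induction with
    | base =>
      have := hG.eq_zero_of_eq (x n) (x n) (x n) rfl rfl
      simp [this]
    | succ m hm ih =>
      have h1 := hG.rect (x n) (x (m+1)) (x (m+1)) (x m)
      have h2 := hmono m
      unfold PhiRel at h2
      linarith
  -- the factor-2 symmetrization
  have hsym : ∀ a b : X, G a b b ≤ 2 * G b a a := by
    intro a b
    have h1 := hG.rect b b a a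
    have h2 := hG.symm_swap a b a
    have h3 := hG.symm_cycle a b b
    have h4 := hG.symm_cycle a a b
    have h5 := hG.symm_cycle a b a
    linarith
  have hnn : ∀ l, φ (x l) ≤ φ (x (l+1)) := by
    intro l
    have := hmono l
    unfold PhiRel at this
    have h0 := hG.nonneg (x l) (x (l+1)) (x (l+1))
    linarith
  have hmon : Monotone (fun l => φ (x l)) := monotone_nat_of_le_succ hnn
  have hbdd : BddAbove (Set.range (fun l => φ (x l))) := by
    obtain ⟨M, hM⟩ := hφ
    exact ⟨M, by rintro _ ⟨l, rfl⟩; exact hM _⟩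
  have hcauchy : CauchySeq (fun l => φ (x l)) :=
    (tendsto_atTop_ciSup hmon hbdd).cauchySeq
  rw [Metric.cauchySeq_iff] at hcauchy
  obtain ⟨N, hN⟩ := hcauchy (ε / 6) (by linarith)
  -- key: for n ≤ m both ≥ N, φ(x m) - φ(x n) < ε/6
  have hkey : ∀ a b, N ≤ a → N ≤ b → G (x a) (x b) (x b) < 2 * (ε / 6) := by
    intro a b ha hb
    have hD : ∀ c d, N ≤ c → N ≤ d → c ≤ d → G (x c) (x d) (x d) < ε / 6 := by
      intro c d hc hd hcd
      have := hN d hd c hc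
      rw [Real.dist_eq] at this
      have h1 := abs_le.mp this.le
      have h2 := hchain c d hcd
      have hne : φ (x d) - φ (x c) < ε / 6 := lt_of_le_of_lt (le_abs_self _) this
      linarith
    rcases le_total a b with h | h
    · have := hD a b ha hb h
      linarith
    · have h1 := hD b a hb ha h
      have h2 := hsym (x b) (x a)
      calc G (x a) (x b) (x b) ≤ 2 * G (x b) (x a) (x a) := hsym _ _
        _ < 2 * (ε / 6) := by linarith
  refine ⟨N, fun n hn m hm l hl => ?_⟩
  have h1 := hG.rect (x n) (x m) (x l) (x N)
  have h2 := hG.rect (x N) (x m) (x l) (x m)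
  have h3a := hG.symm_cycle (x m) (x m) (x l)
  have h3b := hG.symm_cycle (x m) (x l) (x m)
  have k1 := hkey n N hn le_rfl
  have k2 := hkey N m le_rfl hm
  have k3 := hkey l m hl hm
  linarith
end

section
/- Let X be a nonempty set, G a G-metric on X such that (X,G) is G-complete, φ : X → ℝ a function bounded from above, and ⪯ the preorder induced by φ. Let n ≥ 2 and let F : X^n → X be preorder-preserving and sequentially continuous. If there exist x_0^1, …, x_0^n ∈ X with x_0^i ⪯ F(x_0^i, x_0^{i+1}, …, x_0^n, x_0^1, …, x_0^{i-1}) for all i = 1,…,n (indices taken cyclically), then F has an n-tuple fixed point: there exist x^{*,1}, …, x^{*,n} ∈ X with F(x^{*,i}, x^{*,i+1}, …, x^{*,n}, x^{*,1}, …, x^{*,i-1}) = x^{*,i} for every i = 1,…,n. -/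
/-- existence of an `n`-tuple fixed point for a preorder-preserving,
sequentially continuous map on a complete G-metric space. -/
theorem ntuple_fixed_point {X : Type*} [Nonempty X] (G : X → X → X → ℝ)
    (hG : IsGMetric G) (hcomp : GComplete G)
    (φ : X → ℝ) (hφ : ∃ M, ∀ x, φ x ≤ M)
    (n : ℕ) (hn : 2 ≤ n) (F : (Fin n → X) → X)
    (hmono : ∀ u v : Fin n → X, (∀ i, PhiRel G φ (u i) (v i)) → PhiRel G φ (F u) (F v))
    (hcont : SeqContinuousN G F)
    (x0 : Fin n → X)
    (hinit : ∀ i : Fin n, PhiRel G φ (x0 i) (F (fun j => x0 (i + j)))) :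
    ∃ p : Fin n → X, ∀ i : Fin n, F (fun j => p (i + j)) = p i := by
  classical
  obtain ⟨M, hM⟩ := hφ
  -- basic symmetry / auxiliary facts about G
  have hsymm : ∀ x y z, G x y z = G y x z := by
    intro x y z
    rw [hG.symm_cycle x y z, hG.symm_swap y z x]
  have hdouble : ∀ x y, G x x y ≤ 2 * G x y y := by
    intro x y
    have h1 : G x x y ≤ G x y y + G y x y := hG.rect x x y y
    have h2 : G y x y = G x y y := by
      rw [hG.symm_swap y x y, hG.symm_cycle x y y]
    linarith
  -- uniqueness of G-limits
  have huniq : ∀ (s : ℕ → X) (q1 q2 : X),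
      GConvergesTo G s q1 → GConvergesTo G s q2 → q1 = q2 := by
    intro s q1 q2 h1 h2
    by_contra hne
    have hpos : 0 < G q1 q2 q2 := by
      have := hG.pos_of_ne q2 q1 (fun h => hne h.symm)
      have heq : G q1 q2 q2 = G q2 q2 q1 := hG.symm_cycle q1 q2 q2
      linarith
    set c := G q1 q2 q2 with hc
    have hc3 : (0:ℝ) < c / 4 := by linarith
    obtain ⟨N1, hN1⟩ := h1 (c/4) hc3
    obtain ⟨N2, hN2⟩ := h2 (c/4) hc3
    set N := max N1 N2
    have hA : G q1 (s N) (s N) < c / 4 := hN1 N (le_max_left _ _) N (le_max_left _ _)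
    have hB : G q2 (s N) (s N) < c / 4 := hN2 N (le_max_right _ _) N (le_max_right _ _)
    have hrect : G q1 q2 q2 ≤ G q1 (s N) (s N) + G (s N) q2 q2 := hG.rect q1 q2 q2 (s N)
    have hB2 : G (s N) q2 q2 ≤ 2 * G q2 (s N) (s N) := by
      have heq : G (s N) q2 q2 = G q2 q2 (s N) := hG.symm_cycle (s N) q2 q2
      have := hdouble q2 (s N)
      linarith
    have : c < c := by
      calc c = G q1 q2 q2 := hc
        _ ≤ G q1 (s N) (s N) + G (s N) q2 q2 := hrect
        _ ≤ G q1 (s N) (s N) + 2 * G q2 (s N) (s N) := by linarith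
        _ < c/4 + 2 * (c/4) := by linarith
        _ ≤ c := by linarith
    exact lt_irrefl _ this
  -- the iteration sequence
  let seq : ℕ → Fin n → X :=
    fun l => Nat.rec x0 (fun _ prev => fun i => F (fun j => prev (i + j))) l
  have seq_succ : ∀ (l : ℕ) (i : Fin n), seq (l+1) i = F (fun j => seq l (i+j)) :=
    fun l i => rfl
  -- the sequence is increasing in the preorder
  have step : ∀ (l : ℕ) (i : Fin n), PhiRel G φ (seq l i) (seq (l+1) i) := by
    intro l
    induction l with
    | zero => intro i; exact hinit i
    | succ l ih =>
      intro i
      have := hmono (fun j => seq l (i+j)) (fun j => seq (l+1) (i+j))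
        (fun j => ih (i+j))
      simpa [seq_succ] using this
  have phi_step : ∀ (l : ℕ) (i : Fin n), φ (seq l i) ≤ φ (seq (l+1) i) := by
    intro l i
    have h := step l i
    have hnn := hG.nonneg (seq l i) (seq (l+1) i) (seq (l+1) i)
    unfold PhiRel at h
    linarith
  have phi_mono : ∀ (i : Fin n), Monotone (fun l => φ (seq l i)) := by
    intro i
    exact monotone_nat_of_le_succ (fun l => phi_step l i)
  -- chain inequality
  have chain : ∀ (a b : ℕ), a ≤ b → ∀ (i : Fin n),
      G (seq a i) (seq b i) (seq b i) ≤ φ (seq b i) - φ (seq a i) := by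
    intro a b hab
    induction b, hab using Nat.le_induction with
    | base =>
      intro i
      have := hG.eq_zero_of_eq (seq a i) (seq a i) (seq a i) rfl rfl
      simp [this]
    | succ b hab ih =>
      intro i
      have hrect : G (seq a i) (seq (b+1) i) (seq (b+1) i)
          ≤ G (seq a i) (seq b i) (seq b i) + G (seq b i) (seq (b+1) i) (seq (b+1) i) :=
        hG.rect (seq a i) (seq (b+1) i) (seq (b+1) i) (seq b i)
      have hs := step b i
      unfold PhiRel at hs
      have := ih i
      linarith
  -- each coordinate sequence is G-Cauchy
  have hcauchy : ∀ i : Fin n, GCauchy G (fun l => seq l i) := by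
    intro i ε hε
    set a : ℕ → ℝ := fun l => φ (seq l i) with ha
    have hbdd : BddAbove (Set.range a) := ⟨M, by rintro _ ⟨l, rfl⟩; exact hM _⟩
    set L : ℝ := ⨆ l, a l with hL
    have hle : ∀ l, a l ≤ L := fun l => le_ciSup hbdd l
    have hlt : L - ε/6 < L := by linarith
    obtain ⟨N, hN⟩ := exists_lt_of_lt_ciSup hlt
    have hdiff : ∀ b c, N ≤ b → b ≤ c → a c - a b < ε / 6 := by
      intro b c hb hbc
      have h1 : a N ≤ a b := phi_mono i hb
      have h2 : a c ≤ L := hle c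
      linarith
    -- bound for sorted indices
    have sorted : ∀ b c d, N ≤ b → b ≤ c → c ≤ d →
        G (seq b i) (seq c i) (seq d i) < ε := by
      intro b c d hb hbc hcd
      have hrect : G (seq b i) (seq c i) (seq d i)
          ≤ G (seq b i) (seq c i) (seq c i) + G (seq c i) (seq c i) (seq d i) :=
        hG.rect (seq b i) (seq c i) (seq d i) (seq c i)
      have h1 : G (seq b i) (seq c i) (seq c i) ≤ a c - a b := chain b c hbc i
      have h2 : G (seq c i) (seq c i) (seq d i) ≤ 2 * G (seq c i) (seq d i) (seq d i) :=
        hdouble (seq c i) (seq d i)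
      have h3 : G (seq c i) (seq d i) (seq d i) ≤ a d - a c := chain c d hcd i
      have h4 : a c - a b < ε/6 := hdiff b c hb hbc
      have h5 : a d - a c < ε/6 := hdiff c d (hb.trans hbc) hcd
      linarith
    refine ⟨N, ?_⟩
    intro b hb c hc d hd
    rcases le_total b c with hbc | hcb
    · rcases le_total c d with hcd | hdc
      · exact sorted b c d hb hbc hcd
      · rcases le_total b d with hbd | hdb
        · rw [hG.symm_swap]
          exact sorted b d c hb hbd hdc
        · rw [hG.symm_cycle, hG.symm_cycle]
          exact sorted d b c hd hdb hbc
    · rcases le_total b d with hbd | hdb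
      · rw [hsymm]
        exact sorted c b d hc hcb hbd
      · rcases le_total c d with hcd | hdc
        · rw [hG.symm_cycle]
          exact sorted c d b hc hcd hdb
        · rw [hG.symm_cycle, hsymm]
          exact sorted d c b hd hdc hcb
  -- limits
  have hpex : ∀ i : Fin n, ∃ p, GConvergesTo G (fun l => seq l i) p :=
    fun i => hcomp _ (hcauchy i)
  choose p hp using hpex
  refine ⟨p, ?_⟩
  intro i
  -- shifted sequence also converges to p i
  have hshift : GConvergesTo G (fun l => seq (l+1) i) (p i) := by
    intro ε hε
    obtain ⟨N, hN⟩ := hp i ε hε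
    exact ⟨N, fun b hb c hc => hN (b+1) (Nat.le_succ_of_le hb) (c+1) (Nat.le_succ_of_le hc)⟩
  -- and to F (fun j => p (i+j)) by continuity
  have hFconv : GConvergesTo G (fun l => seq (l+1) i) (F (fun j => p (i+j))) := by
    have := hcont (fun l => fun j => seq l (i+j)) (fun j => p (i+j))
      (fun j => hp (i+j))
    simpa [seq_succ] using this
  exact huniq _ _ _ hFconv hshift
end

section
/- Let X be a nonempty set, G a G-metric on X such that (X,G) is G-complete, φ : X → ℝ a function bounded from above, and ⪯ the preorder induced by φ. Let n ≥ 2, let F : X^n → X and g : X → X be sequentially continuous, and suppose the pair {F, g} is weakly related. If there exist x_0^1, …, x_0^n ∈ X with x_0^i ⪯ F(x_0^i, x_0^{i+1}, …, x_0^n, x_0^1, …, x_0^{i-1}) for all i = 1,…,n (indices taken cyclically), then F and g have a common n-tuple fixed point: there exist x^{*,1}, …, x^{*,n} ∈ X with F(x^{*,i}, x^{*,i+1}, …, x^{*,n}, x^{*,1}, …, x^{*,i-1}) = g(x^{*,i}) = x^{*,i} for every i = 1,…,n. -/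
section AuxLemmas

variable {X : Type*} {G : X → X → X → ℝ}

private lemma gsymm3 (hG : IsGMetric G) (x y : X) : G x x y = G y x x := by
  rw [hG.symm_cycle, hG.symm_cycle]

private lemma two_mul_bound (hG : IsGMetric G) (x y : X) : G x y y ≤ 2 * G y x x := by
  have h1 : G x y y = G y y x := by rw [hG.symm_cycle]
  have h2 := hG.rect y y x x
  have h3 : G x y x = G y x x := by rw [hG.symm_cycle]
  linarith

private lemma gconv_comp {s : ℕ → X} {p : X} (hp : GConvergesTo G s p)
    (f : ℕ → ℕ) (hf : ∀ m, m ≤ f m) : GConvergesTo G (fun m => s (f m)) p := by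
  intro ε hε
  obtain ⟨N, hN⟩ := hp ε hε
  exact ⟨N, fun a ha b hb => hN (f a) (le_trans ha (hf a)) (f b) (le_trans hb (hf b))⟩

private lemma glimit_unique (hG : IsGMetric G) {s : ℕ → X} {p q : X}
    (hp : GConvergesTo G s p) (hq : GConvergesTo G s q) : p = q := by
  by_contra hne
  have hc : 0 < G q q p := hG.pos_of_ne q p (Ne.symm hne)
  obtain ⟨N1, h1⟩ := hp (G q q p / 4) (by linarith)
  obtain ⟨N2, h2⟩ := hq (G q q p / 4) (by linarith)
  have ha := h1 (max N1 N2) (le_max_left _ _) (max N1 N2) (le_max_left _ _)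
  have hb := h2 (max N1 N2) (le_max_right _ _) (max N1 N2) (le_max_right _ _)
  have h3 := hG.rect p q q (s (max N1 N2))
  have h4 := two_mul_bound hG (s (max N1 N2)) q
  have h5 : G p q q = G q q p := by rw [hG.symm_cycle]
  linarith

end AuxLemmas

/-- The iteration sequence: alternate applying `F` (on cyclic shifts) and `g`. -/
private def mySeq {X : Type*} {n : ℕ} (F : (Fin n → X) → X) (g : X → X)
    (x0 : Fin n → X) : ℕ → Fin n → X
  | 0 => x0
  | (m+1) =>
      if Even m then (fun i => F (fun j => mySeq F g x0 m (i + j)))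
      else (fun i => g (mySeq F g x0 m i))

private lemma mySeq_succ {X : Type*} {n : ℕ} (F : (Fin n → X) → X) (g : X → X)
    (x0 : Fin n → X) (m : ℕ) :
    mySeq F g x0 (m+1) =
      if Even m then (fun i => F (fun j => mySeq F g x0 m (i + j)))
      else (fun i => g (mySeq F g x0 m i)) := rfl


/-- a weakly related pair `{F, g}` of sequentially continuous maps on a
complete G-metric space has a common `n`-tuple fixed point. -/
theorem common_ntuple_fixed_point {X : Type*} [Nonempty X] (G : X → X → X → ℝ)
    (hG : IsGMetric G) (hcomp : GComplete G)
    (φ : X → ℝ) (hφ : ∃ M, ∀ x, φ x ≤ M)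
    (n : ℕ) (hn : 2 ≤ n) (F : (Fin n → X) → X) (g : X → X)
    (hFcont : SeqContinuousN G F) (hgcont : SeqContinuous1 G g)
    (hw : WeaklyRelated G φ F g)
    (x0 : Fin n → X)
    (hinit : ∀ i : Fin n, PhiRel G φ (x0 i) (F (fun j => x0 (i + j)))) :
    ∃ p : Fin n → X, ∀ i : Fin n,
      F (fun j => p (i + j)) = p i ∧ g (p i) = p i := by
  obtain ⟨M, hM⟩ := hφ
  set s := mySeq F g x0 with hs
  -- the basic step relation along the iteration sequence
  have hstep : ∀ m (i : Fin n), PhiRel G φ (s m i) (s (m+1) i) := by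
    intro m i
    match m with
    | 0 =>
        have e1 : s 1 = fun i => F (fun j => s 0 (i + j)) := by
          rw [hs, mySeq_succ, if_pos (Even.zero)]
        rw [e1]
        exact hinit i
    | (m+1) =>
        rcases Nat.even_or_odd m with he | ho
        · have hodd : ¬ Even (m+1) := by simp [Nat.even_add_one, he]
          have e1 : s (m+1) = fun i => F (fun j => s m (i + j)) := by
            rw [hs, mySeq_succ, if_pos he]
          have e2 : s (m+2) = fun i => g (s (m+1) i) := by
            rw [hs, mySeq_succ, if_neg hodd]
          rw [e2, e1]
          exact (hw (s m) i).1
        · have hne : ¬ Even m := Nat.not_even_iff_odd.mpr ho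
          have hev : Even (m+1) := Nat.even_add_one.mpr hne
          have e1 : s (m+1) = fun i => g (s m i) := by
            rw [hs, mySeq_succ, if_neg hne]
          have e2 : s (m+2) = fun i => F (fun j => s (m+1) (i + j)) := by
            rw [hs, mySeq_succ, if_pos hev]
          rw [e2, e1]
          exact (hw (s m) i).2
  have hmono : ∀ i : Fin n, Monotone fun m => φ (s m i) := by
    intro i
    apply monotone_nat_of_le_succ
    intro m
    have h1 := hstep m i
    have h2 := hG.nonneg (s m i) (s (m+1) i) (s (m+1) i)
    unfold PhiRel at h1
    linarith
  -- telescoping bound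
  have chain : ∀ (i : Fin n) a b, a ≤ b →
      G (s a i) (s b i) (s b i) ≤ φ (s b i) - φ (s a i) := by
    intro i a b hab
    induction b, hab using Nat.le_induction with
    | base =>
        have h0 := hG.eq_zero_of_eq (s a i) (s a i) (s a i) rfl rfl
        linarith
    | succ b hab ih =>
        have h1 := hstep b i
        have h2 := hG.rect (s a i) (s (b+1) i) (s (b+1) i) (s b i)
        unfold PhiRel at h1
        linarith
  -- the φ-values form a Cauchy-type family
  have key : ∀ (i : Fin n), ∀ ε > (0:ℝ), ∃ N, ∀ a ≥ N, ∀ b ≥ N, a ≤ b →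
      φ (s b i) - φ (s a i) < ε := by
    intro i ε hε
    have hbdd : BddAbove (Set.range fun m => φ (s m i)) := by
      refine ⟨M, ?_⟩
      rintro _ ⟨m, rfl⟩
      exact hM _
    have h1 : ∀ m, φ (s m i) ≤ ⨆ m, φ (s m i) := fun m => le_ciSup hbdd m
    obtain ⟨N, hN⟩ := exists_lt_of_lt_ciSup
      (show (⨆ m, φ (s m i)) - ε < ⨆ m, φ (s m i) by linarith)
    refine ⟨N, fun a ha b hb hab => ?_⟩
    have h2 : φ (s N i) ≤ φ (s a i) := hmono i ha
    have h3 := h1 b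
    linarith
  -- each coordinate sequence is G-Cauchy
  have hcauchy : ∀ i : Fin n, GCauchy G (fun m => s m i) := by
    intro i ε hε
    obtain ⟨N, hN⟩ := key i (ε/5) (by linarith)
    have D : ∀ a ≥ N, ∀ b ≥ N, G (s a i) (s b i) (s b i) ≤ 2*(ε/5) := by
      intro a ha b hb
      rcases le_total a b with h | h
      · have h1 := chain i a b h
        have h2 := hN a ha b hb h
        linarith
      · have h1 := two_mul_bound hG (s a i) (s b i)
        have h2 := chain i b a h
        have h3 := hN b hb a ha h
        linarith
    refine ⟨N, fun a ha b hb c hc => ?_⟩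
    have h1 := hG.rect (s a i) (s b i) (s c i) (s b i)
    have h2 : G (s b i) (s b i) (s c i) = G (s c i) (s b i) (s b i) :=
      gsymm3 hG (s b i) (s c i)
    have h3 := D a ha b hb
    have h4 := D c hc b hb
    linarith
  have hex : ∀ i : Fin n, ∃ q, GConvergesTo G (fun m => s m i) q :=
    fun i => hcomp _ (hcauchy i)
  choose p hp using hex
  refine ⟨p, fun i => ?_⟩
  have hodd : GConvergesTo G (fun l => s (2*l+1) i) (p i) :=
    gconv_comp (hp i) (fun l => 2*l+1) (fun l => by show l ≤ 2*l+1; omega)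
  have heven2 : GConvergesTo G (fun l => s (2*l+2) i) (p i) :=
    gconv_comp (hp i) (fun l => 2*l+2) (fun l => by show l ≤ 2*l+2; omega)
  have hF : GConvergesTo G (fun l => F (fun j => s (2*l) (i + j)))
      (F (fun j => p (i + j))) := by
    refine hFcont (fun l j => s (2*l) (i + j)) (fun j => p (i + j)) (fun j => ?_)
    exact gconv_comp (hp (i + j)) (fun l => 2*l) (fun l => by show l ≤ 2*l; omega)
  have heq : (fun l => F (fun j => s (2*l) (i + j))) = fun l => s (2*l+1) i := by
    funext l
    have e1 : s (2*l+1) = fun i => F (fun j => s (2*l) (i + j)) := by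
      rw [hs, mySeq_succ, if_pos ⟨l, two_mul l⟩]
    rw [e1]
  rw [heq] at hF
  have hFfix : F (fun j => p (i + j)) = p i := glimit_unique hG hF hodd
  have hg : GConvergesTo G (fun l => g (s (2*l+1) i)) (g (p i)) :=
    hgcont _ _ hodd
  have heq2 : (fun l => g (s (2*l+1) i)) = fun l => s (2*l+2) i := by
    funext l
    have hne : ¬ Even (2*l+1) := by simp [Nat.even_add_one, parity_simps]
    have e1 : s (2*l+2) = fun i => g (s (2*l+1) i) := by
      rw [hs, mySeq_succ, if_neg hne]
    rw [e1]
  rw [heq2] at hg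
  exact ⟨hFfix, glimit_unique hG hg heven2⟩
end

section
/- Let X be a nonempty set, G a G-metric on X such that (X,G) is G-complete, φ : X → ℝ a function bounded from above, and ⪯ the preorder induced by φ. Let n ≥ 2 and let F : X^n → X and H, K : X → X be three sequentially continuous mappings such that both pairs {F, K} and {F, H} are weakly related. Then F, H and K have a common n-tuple fixed point: there exist x^{*,1}, …, x^{*,n} ∈ X with F(x^{*,i}, x^{*,i+1}, …, x^{*,n}, x^{*,1}, …, x^{*,i-1}) = H(x^{*,i}) = K(x^{*,i}) = x^{*,i} for every i = 1,…,n (indices taken cyclically). -/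
private lemma gmetric_two {X : Type*} {G : X → X → X → ℝ} (hG : IsGMetric G) (x y : X) :
    G x y y ≤ 2 * G y x x := by
  have h1 : G x y y = G y y x := hG.symm_cycle x y y
  have h2 : G y y x ≤ G y x x + G x y x := hG.rect y y x x
  have h3 : G x y x = G y x x := hG.symm_cycle x y x
  linarith

private lemma gmetric_tri {X : Type*} {G : X → X → X → ℝ} (hG : IsGMetric G) (x y z : X) :
    G x z z ≤ G x y y + G y z z := hG.rect x z z y

private lemma gconv_sub {X : Type*} {G : X → X → X → ℝ} {s : ℕ → X} {p : X}
    (h : GConvergesTo G s p) (k : ℕ → ℕ) (hk : ∀ l, l ≤ k l) :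
    GConvergesTo G (fun l => s (k l)) p := by
  intro ε hε
  obtain ⟨N, hN⟩ := h ε hε
  exact ⟨N, fun a ha b hb => hN (k a) (le_trans ha (hk a)) (k b) (le_trans hb (hk b))⟩

private lemma gconv_unique {X : Type*} {G : X → X → X → ℝ} (hG : IsGMetric G)
    {s : ℕ → X} {p q : X} (h1 : GConvergesTo G s p) (h2 : GConvergesTo G s q) : p = q := by
  by_contra hne
  have hpos : 0 < G q q p := hG.pos_of_ne q p (Ne.symm hne)
  have hpq : G p q q = G q q p := by rw [hG.symm_cycle]
  obtain ⟨N1, hN1⟩ := h1 (G q q p / 3) (by positivity)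
  obtain ⟨N2, hN2⟩ := h2 (G q q p / 3) (by positivity)
  have a1 : G p (s (max N1 N2)) (s (max N1 N2)) < G q q p / 3 :=
    hN1 _ (le_max_left _ _) _ (le_max_left _ _)
  have a2 : G q (s (max N1 N2)) (s (max N1 N2)) < G q q p / 3 :=
    hN2 _ (le_max_right _ _) _ (le_max_right _ _)
  have tri : G p q q ≤ G p (s (max N1 N2)) (s (max N1 N2)) + G (s (max N1 N2)) q q :=
    hG.rect p q q (s (max N1 N2))
  have two : G (s (max N1 N2)) q q ≤ 2 * G q (s (max N1 N2)) (s (max N1 N2)) :=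
    gmetric_two hG _ _
  linarith

private def seqAux {X : Type*} {n : ℕ} (F : (Fin n → X) → X) (H K : X → X)
    (x0 : Fin n → X) : ℕ → Fin n → X
  | 0 => x0
  | (l + 1) => fun i =>
      if l % 2 = 0 then F (fun j => seqAux F H K x0 l (i + j))
      else if l % 4 = 1 then K (seqAux F H K x0 l i)
      else H (seqAux F H K x0 l i)

private lemma seqAux_succ {X : Type*} {n : ℕ} (F : (Fin n → X) → X) (H K : X → X)
    (x0 : Fin n → X) (l : ℕ) (i : Fin n) :
    seqAux F H K x0 (l + 1) i =
      if l % 2 = 0 then F (fun j => seqAux F H K x0 l (i + j))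
      else if l % 4 = 1 then K (seqAux F H K x0 l i)
      else H (seqAux F H K x0 l i) := by
  rw [seqAux]

/-- three sequentially continuous maps `F : Xⁿ → X` and `H, K : X → X`,
with `{F, K}` and `{F, H}` weakly related, have a common `n`-tuple fixed point. -/
theorem common_ntuple_fixed_point_three {X : Type*} [Nonempty X] (G : X → X → X → ℝ)
    (hG : IsGMetric G) (hcomp : GComplete G)
    (φ : X → ℝ) (hφ : ∃ M, ∀ x, φ x ≤ M)
    (n : ℕ) (hn : 2 ≤ n) (F : (Fin n → X) → X) (H K : X → X)
    (hFcont : SeqContinuousN G F) (hHcont : SeqContinuous1 G H)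
    (hKcont : SeqContinuous1 G K)
    (hwK : WeaklyRelated G φ F K) (hwH : WeaklyRelated G φ F H) :
    ∃ p : Fin n → X, ∀ i : Fin n,
      F (fun j => p (i + j)) = p i ∧ H (p i) = p i ∧ K (p i) = p i := by
  classical
  obtain ⟨M, hM⟩ := hφ
  obtain ⟨c⟩ := (inferInstance : Nonempty X)
  set u : ℕ → Fin n → X := seqAux F H K (fun _ => c) with hu
  have uF : ∀ l, l % 2 = 0 → ∀ i, u (l + 1) i = F (fun j => u l (i + j)) := by
    intro l h i
    rw [hu, seqAux_succ, if_pos h]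
  have uK : ∀ l, l % 4 = 1 → ∀ i, u (l + 1) i = K (u l i) := by
    intro l h i
    rw [hu, seqAux_succ, if_neg (by omega), if_pos h]
  have uH : ∀ l, l % 4 = 3 → ∀ i, u (l + 1) i = H (u l i) := by
    intro l h i
    rw [hu, seqAux_succ, if_neg (by omega), if_neg (by omega)]
  -- the monotone chain
  have hchain : ∀ m (i : Fin n), PhiRel G φ (u (m + 1) i) (u (m + 1 + 1) i) := by
    intro m i
    rcases (show m % 4 = 0 ∨ m % 4 = 1 ∨ m % 4 = 2 ∨ m % 4 = 3 by omega) with h | h | h | h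
    · rw [uK (m + 1) (by omega) i]
      simp only [uF m (by omega)]
      exact (hwK (u m) i).1
    · rw [uF (m + 1) (by omega) i]
      simp only [uK m h]
      exact (hwK (u m) i).2
    · rw [uH (m + 1) (by omega) i]
      simp only [uF m (by omega)]
      exact (hwH (u m) i).1
    · rw [uF (m + 1) (by omega) i]
      simp only [uH m h]
      exact (hwH (u m) i).2
  -- telescoping estimate
  have tel : ∀ (i : Fin n) m l, l ≤ m →
      G (u (l + 1) i) (u (m + 1) i) (u (m + 1) i) ≤ φ (u (m + 1) i) - φ (u (l + 1) i) := by
    intro i m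
    induction m with
    | zero =>
      intro l hl
      have : l = 0 := by omega
      subst this
      rw [hG.eq_zero_of_eq (u (0 + 1) i) (u (0 + 1) i) (u (0 + 1) i) rfl rfl]
      linarith
    | succ m ih =>
      intro l hl
      rcases Nat.lt_or_ge l (m + 1) with h | h
      · have h1 := ih l (by omega)
        have h2 : G (u (m + 1) i) (u (m + 1 + 1) i) (u (m + 1 + 1) i) ≤
            φ (u (m + 1 + 1) i) - φ (u (m + 1) i) := hchain m i
        have h3 := gmetric_tri hG (u (l + 1) i) (u (m + 1) i) (u (m + 1 + 1) i)
        linarith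
      · have : l = m + 1 := by omega
        subst this
        rw [hG.eq_zero_of_eq (u (m + 1 + 1) i) (u (m + 1 + 1) i) (u (m + 1 + 1) i) rfl rfl]
        linarith
  -- Cauchy
  have hbdd : ∀ i : Fin n, BddAbove (Set.range fun l => φ (u (l + 1) i)) := by
    intro i
    exact ⟨M, by rintro x ⟨l, rfl⟩; exact hM _⟩
  have hcauchy : ∀ i, GCauchy G (fun l => u l i) := by
    intro i ε hε
    set L := ⨆ l, φ (u (l + 1) i) with hLdef
    have hle : ∀ l, φ (u (l + 1) i) ≤ L := fun l => le_ciSup (hbdd i) l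
    obtain ⟨N, hN⟩ : ∃ N, L - ε / 6 < φ (u (N + 1) i) := by
      by_contra hcon
      push_neg at hcon
      have : L ≤ L - ε / 6 := ciSup_le hcon
      linarith
    have hmono : ∀ l m, l ≤ m → φ (u (l + 1) i) ≤ φ (u (m + 1) i) := by
      intro l m h
      have h1 := tel i m l h
      have h2 := hG.nonneg (u (l + 1) i) (u (m + 1) i) (u (m + 1) i)
      linarith
    have key : ∀ l, N ≤ l → ∀ m, N ≤ m →
        G (u (l + 1) i) (u (m + 1) i) (u (m + 1) i) < ε / 3 := by
      intro l hl m hm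
      have hNl := hmono N l hl
      have hNm := hmono N m hm
      rcases le_total l m with h | h
      · have h1 := tel i m l h
        have h2 := hle m
        linarith
      · have h1 := tel i l m h
        have h2 := gmetric_two hG (u (l + 1) i) (u (m + 1) i)
        have h3 := hle l
        linarith
    refine ⟨N + 1, fun b hb c hc d hd => ?_⟩
    obtain ⟨b', rfl⟩ : ∃ b', b = b' + 1 := ⟨b - 1, by omega⟩
    obtain ⟨c', rfl⟩ : ∃ c', c = c' + 1 := ⟨c - 1, by omega⟩
    obtain ⟨d', rfl⟩ : ∃ d', d = d' + 1 := ⟨d - 1, by omega⟩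
    have t1 := hG.rect (u (b' + 1) i) (u (c' + 1) i) (u (d' + 1) i) (u (N + 1) i)
    have t2 := hG.rect (u (N + 1) i) (u (c' + 1) i) (u (d' + 1) i) (u (c' + 1) i)
    have t3 : G (u (c' + 1) i) (u (c' + 1) i) (u (d' + 1) i)
        = G (u (d' + 1) i) (u (c' + 1) i) (u (c' + 1) i) := by
      rw [hG.symm_cycle, hG.symm_cycle]
    have k1 := key b' (by omega) N (le_refl N)
    have k2 := key N (le_refl N) c' (by omega)
    have k3 := key d' (by omega) c' (by omega)
    linarith
  have hp' : ∀ i, ∃ q, GConvergesTo G (fun l => u l i) q := fun i => hcomp _ (hcauchy i)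
  choose p hp using hp'
  refine ⟨p, fun i => ⟨?_, ?_, ?_⟩⟩
  · -- F fixed point
    have c1 : GConvergesTo G (fun l => F (fun j => u (2 * l) (i + j)))
        (F (fun j => p (i + j))) := by
      exact hFcont (fun l j => u (2 * l) (i + j)) (fun j => p (i + j))
        (fun j => gconv_sub (hp (i + j)) (fun l => 2 * l) (fun l => (by omega : l ≤ 2 * l)))
    have c2 : GConvergesTo G (fun l => F (fun j => u (2 * l) (i + j))) (p i) := by
      have he : (fun l => F (fun j => u (2 * l) (i + j))) = fun l => u (2 * l + 1) i := by
        funext l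
        exact (uF (2 * l) (by omega) i).symm
      rw [he]
      exact gconv_sub (hp i) (fun l => 2 * l + 1) (fun l => (by omega : l ≤ 2 * l + 1))
    exact gconv_unique hG c1 c2
  · -- H fixed point
    have c1 : GConvergesTo G (fun l => H (u (4 * l + 3) i)) (H (p i)) :=
      hHcont _ _ (gconv_sub (hp i) (fun l => 4 * l + 3) (fun l => (by omega : l ≤ 4 * l + 3)))
    have c2 : GConvergesTo G (fun l => H (u (4 * l + 3) i)) (p i) := by
      have he : (fun l => H (u (4 * l + 3) i)) = fun l => u (4 * l + 3 + 1) i := by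
        funext l
        exact (uH (4 * l + 3) (by omega) i).symm
      rw [he]
      exact gconv_sub (hp i) (fun l => 4 * l + 3 + 1) (fun l => (by omega : l ≤ 4 * l + 3 + 1))
    exact gconv_unique hG c1 c2
  · -- K fixed point
    have c1 : GConvergesTo G (fun l => K (u (4 * l + 1) i)) (K (p i)) :=
      hKcont _ _ (gconv_sub (hp i) (fun l => 4 * l + 1) (fun l => (by omega : l ≤ 4 * l + 1)))
    have c2 : GConvergesTo G (fun l => K (u (4 * l + 1) i)) (p i) := by
      have he : (fun l => K (u (4 * l + 1) i)) = fun l => u (4 * l + 1 + 1) i := by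
        funext l
        exact (uK (4 * l + 1) (by omega) i).symm
      rw [he]
      exact gconv_sub (hp i) (fun l => 4 * l + 1 + 1) (fun l => (by omega : l ≤ 4 * l + 1 + 1))
    exact gconv_unique hG c1 c2
end
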